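/- Let G be a finite simple graph of order n with no connected component of order less than 3 and such that every bipartite component of G has both color classes of even order. Let s = n + 1 if n ≡ 2 (mod 4) and s = n otherwise. Then for every integer t ≥ s and every Abelian group 𝒢 of order t having at most one involution, there exists a 𝒢-irregular labeling of G. -/

import Mathlib

/-- The weighted degree of a vertex `v` under an edge labeling `f` with values in an
additive Abelian group: the sum of the labels of all edges incident to `v`. -/
noncomputable def SimpleGraph.wdeg {V : Type} [Fintype V] (G : SimpleGraph V)
    {A : Type} [AddCommGroup A] (f : Sym2 V → A) (v : V) : A :=
  ∑ u ∈ (G.neighborSet v).toFinite.toFinset, f s(v, u)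

/-- An edge labeling `f` with values in an Abelian group `A` is `A`-irregular if the
weighted degrees of all vertices are pairwise distinct. -/
def SimpleGraph.IsIrregular {V : Type} [Fintype V] (G : SimpleGraph V)
    {A : Type} [AddCommGroup A] (f : Sym2 V → A) : Prop :=
  Function.Injective (G.wdeg f)

/-- The group irregularity strength `s_g(G)`: the smallest integer `s` such that for
every Abelian group of order `s` there exists a `𝒢`-irregular labeling of `G`. -/
noncomputable def SimpleGraph.groupIrregularityStrength {V : Type} [Fintype V]
    (G : SimpleGraph V) : ℕ :=
  sInf {s : ℕ | ∀ (A : Type) [AddCommGroup A] [Fintype A],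
    Fintype.card A = s → ∃ f : Sym2 V → A, G.IsIrregular f}

/-- The modular edge-gracefulness `k(G)`: the smallest integer `k ≥ |V(G)|` such that
there exists a `ℤ_k`-irregular labeling of `G`. -/
noncomputable def SimpleGraph.modularEdgeGracefulness {V : Type} [Fintype V]
    (G : SimpleGraph V) : ℕ :=
  sInf {k : ℕ | Fintype.card V ≤ k ∧ ∃ f : Sym2 V → ZMod k, G.IsIrregular f}

/-- `(X, Y)` is a bipartition of the connected component `c` of `G`: the two classes
partition the vertex set of `c` and every edge of the component joins `X` and `Y`. -/
def SimpleGraph.IsComponentBipartition {V : Type} (G : SimpleGraph V)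
    (c : G.ConnectedComponent) (X Y : Set V) : Prop :=
  X ∪ Y = c.supp ∧ Disjoint X Y ∧
    ∀ u v : V, u ∈ c.supp → v ∈ c.supp → G.Adj u v →
      ((u ∈ X ∧ v ∈ Y) ∨ (u ∈ Y ∧ v ∈ X))

/-!
A vertex weighting `w : V → 𝒢` is the weighted-degree function of some labeling as soon as, on
every bipartite component, the two colour classes have the same weight sum and, on every other
component, the weight sum lies in `2𝒢`: a label `a` on an edge adds `a` at both ends, so along a
walk a value can be moved from one vertex to another with sign `(-1) ^ length`, and an odd closed
walk puts `2a` on a single vertex.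

It remains to choose pairwise distinct weights with these sums. Almost all of them come in pairs
`{a, -a}`, drawn from a set containing one element out of each such pair with `a ≠ -a`; every
non-bipartite component of odd order also gets one element of `2𝒢`, if possible `0` or the
involution. Counting with `|𝒢[2]| * |2𝒢| = |𝒢|` shows that this fits, except when
`|𝒢| = n ≡ 0 (mod 4)` and all components have even order. Then the involution is `σ + σ` for some
`σ`, and one component takes `{0, σ}` and `{σ + σ, -σ}` on its two sides, or all four labels.
-/

open Finset Function Pointwise
open scoped Classical

namespace SimpleGraph

variable {V : Type} {G : SimpleGraph V}

@[elab_as_elim]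
theorem Reachable.induction_on_adj {P : V → Prop} {u v : V} (h : G.Reachable u v) (hu : P u)
    (hstep : ∀ x y, G.Reachable u x → G.Adj x y → P x → P y) : P v := by
  rw [reachable_iff_reflTransGen] at h
  induction h with
  | refl => exact hu
  | tail hux hxy ih => exact hstep _ _ ((reachable_iff_reflTransGen _ _).2 hux) hxy ih

theorem reachable_of_mem_supp {c : G.ConnectedComponent} {u v : V} (hu : u ∈ c.supp)
    (hv : v ∈ c.supp) : G.Reachable u v :=
  ConnectedComponent.exact (hu.trans hv.symm)

theorem IsComponentBipartition.symm {c : G.ConnectedComponent} {X Y : Set V}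
    (h : G.IsComponentBipartition c X Y) : G.IsComponentBipartition c Y X :=
  ⟨Set.union_comm X Y ▸ h.1, h.2.1.symm, fun u v hu hv huv => (h.2.2 u v hu hv huv).symm⟩

theorem IsComponentBipartition.nonempty_left {c : G.ConnectedComponent} {X Y : Set V}
    (h : G.IsComponentBipartition c X Y) (hc : 2 ≤ c.supp.ncard) : X.Nonempty := by
  obtain ⟨v, hv⟩ := c.nonempty_supp
  obtain ⟨u, hu, huv⟩ := Set.exists_ne_of_one_lt_ncard hc v
  obtain ⟨p⟩ := reachable_of_mem_supp hv hu
  have hadj := p.adj_snd (Walk.not_nil_of_ne huv.symm)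
  have hsnd : p.snd ∈ c.supp := (ConnectedComponent.sound hadj.reachable).symm.trans hv
  rcases h.2.2 v p.snd hv hsnd hadj with ⟨hvX, -⟩ | ⟨-, hX⟩
  exacts [⟨v, hvX⟩, ⟨_, hX⟩]

variable [Fintype V] {A : Type} [AddCommGroup A]

variable (G A) in
noncomputable def wdegHom : (Sym2 V → A) →+ (V → A) where
  toFun := G.wdeg
  map_zero' := by ext; simp [wdeg]
  map_add' f g := by ext; simp [wdeg, sum_add_distrib]

theorem wdeg_single {u v : V} (h : G.Adj u v) (a : A) :
    G.wdeg (Pi.single s(u, v) a) = Pi.single u a + Pi.single v a := by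
  ext x
  simp only [wdeg, Pi.single_apply, Sym2.eq_iff, Pi.add_apply]
  by_cases hxu : x = u
  · subst hxu
    simp [h, h.ne]
  by_cases hxv : x = v
  · subst hxv
    simp [h.symm, h.ne.symm]
  simp [hxu, hxv]

variable (G A) in
/-- Modulo weighted-degree functions, a weight `a` at `u` can be traded for `ε • a` at `v`. -/
def SingleCongr (u v : V) (ε : ℤ) : Prop :=
  ∀ a : A, Pi.single u a - ε • Pi.single v a ∈ (G.wdegHom A).range

theorem SingleCongr.refl (v : V) : G.SingleCongr A v v 1 := fun a => by
  simp [zero_mem]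

theorem SingleCongr.of_adj {u v w : V} {ε : ℤ} (hu : G.SingleCongr A u v ε) (h : G.Adj u w) :
    G.SingleCongr A w v (-ε) := fun a => by
  have hedge : Pi.single u a + Pi.single w a ∈ (G.wdegHom A).range := ⟨_, wdeg_single h a⟩
  convert sub_mem hedge (hu a) using 1
  rw [neg_smul]
  abel

theorem singleCongr_or_of_reachable {u v : V} (h : G.Reachable v u) :
    G.SingleCongr A u v 1 ∨ G.SingleCongr A u v (-1) := by
  refine h.induction_on_adj (Or.inl (SingleCongr.refl v)) fun x y _ hxy ih => ?_
  rcases ih with hx | hx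
  · exact Or.inr (hx.of_adj hxy)
  · exact Or.inl (by simpa using hx.of_adj hxy)

theorem singleCongr_of_bipartition {c : G.ConnectedComponent} {X Y : Set V} {u v : V}
    (hXY : G.IsComponentBipartition c X Y) (hv : v ∈ X) (hu : u ∈ c.supp) :
    (u ∈ X → G.SingleCongr A u v 1) ∧ (u ∈ Y → G.SingleCongr A u v (-1)) := by
  have hvc : v ∈ c.supp := hXY.1 ▸ Or.inl hv
  refine (reachable_of_mem_supp hvc hu).induction_on_adj
    ⟨fun _ => .refl v, fun hvY => (hXY.2.1.ne_of_mem hv hvY rfl).elim⟩ fun x y hvx hxy ih => ?_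
  have hx : x ∈ c.supp := (ConnectedComponent.sound hvx).symm.trans hvc
  have hy : y ∈ c.supp := (ConnectedComponent.sound hxy.reachable).symm.trans hx
  rcases hXY.2.2 x y hx hy hxy with ⟨hxX, hyY⟩ | ⟨hxY, hyX⟩
  · exact ⟨fun hyX => (hXY.2.1.ne_of_mem hyX hyY rfl).elim, fun _ => (ih.1 hxX).of_adj hxy⟩
  · exact ⟨fun _ => by simpa using (ih.2 hxY).of_adj hxy,
      fun hyY => (hXY.2.1.ne_of_mem hyX hyY rfl).elim⟩

/-- The vertices congruent to `v` with sign `1`, resp. only with sign `-1`, form a bipartition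
unless some vertex has both signs, which puts `2 • Pi.single v a` in the range. -/
theorem exists_bipartition_or_singleCongr_neg_one {c : G.ConnectedComponent} {v : V}
    (hv : v ∈ c.supp) :
    (∃ X Y, G.IsComponentBipartition c X Y) ∨ G.SingleCongr A v v (-1) := by
  by_cases hboth : ∃ u ∈ c.supp, G.SingleCongr A u v 1 ∧ G.SingleCongr A u v (-1)
  · obtain ⟨u, -, hpos, hneg⟩ := hboth
    refine Or.inr fun a => ?_
    convert sub_mem (hneg a) (hpos a) using 1
    abel
  push Not at hboth
  have hcover : ∀ u ∈ c.supp, G.SingleCongr A u v 1 ∨ G.SingleCongr A u v (-1) :=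
    fun u hu => singleCongr_or_of_reachable (reachable_of_mem_supp hv hu)
  refine Or.inl ⟨{u | u ∈ c.supp ∧ G.SingleCongr A u v 1},
    {u | u ∈ c.supp ∧ ¬G.SingleCongr A u v 1}, ?_, ?_, fun x y hx hy hxy => ?_⟩
  · ext u; by_cases hu : G.SingleCongr A u v 1 <;> simp [hu]
  · exact Set.disjoint_left.2 fun u hu hu' => hu'.2 hu.2
  · rcases hcover x hx with hxp | hxn
    · exact Or.inl ⟨⟨hx, hxp⟩, hy, fun hyp => hboth y hy hyp (hxp.of_adj hxy)⟩
    · have hyp : G.SingleCongr A y v 1 := by simpa using hxn.of_adj hxy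
      exact Or.inr ⟨⟨hx, fun hxp => hboth x hx hxp hxn⟩, hy, hyp⟩

theorem sum_single_sub_smul_mem_range {S : Finset V} {v : V} {ε : ℤ}
    (hS : ∀ u ∈ S, G.SingleCongr A u v ε) (w : V → A) :
    ∑ u ∈ S, Pi.single u (w u) - ε • Pi.single v (∑ u ∈ S, w u) ∈ (G.wdegHom A).range := by
  have hsingle : (Pi.single v (∑ u ∈ S, w u) : V → A) = ∑ u ∈ S, Pi.single v (w u) :=
    map_sum (AddMonoidHom.single (fun _ => A) v) w S
  rw [hsingle, smul_sum, ← sum_sub_distrib]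
  exact sum_mem fun u hu => hS u hu (w u)

theorem sum_single_mem_range_of_bipartition {c : G.ConnectedComponent} {X Y : Set V}
    (hXY : G.IsComponentBipartition c X Y) (w : V → A)
    (hw : ∑ u ∈ X.toFinset, w u = ∑ u ∈ Y.toFinset, w u) :
    ∑ u with G.connectedComponentMk u = c, Pi.single u (w u) ∈ (G.wdegHom A).range := by
  obtain ⟨v, hv⟩ := c.nonempty_supp
  wlog hvX : v ∈ X generalizing X Y with H
  · exact H hXY.symm hw.symm ((hXY.1 ▸ hv : v ∈ X ∪ Y).resolve_left hvX)
  have hsplit : ({u | G.connectedComponentMk u = c} : Finset V) = X.toFinset ∪ Y.toFinset := by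
    ext u; simp [← Set.mem_union, hXY.1]
  have hX := sum_single_sub_smul_mem_range (ε := 1)
    (fun u hu => (singleCongr_of_bipartition (A := A) hXY hvX (hXY.1 ▸ Or.inl
      (Set.mem_toFinset.1 hu))).1 (Set.mem_toFinset.1 hu)) w
  have hY := sum_single_sub_smul_mem_range (ε := -1)
    (fun u hu => (singleCongr_of_bipartition (A := A) hXY hvX (hXY.1 ▸ Or.inr
      (Set.mem_toFinset.1 hu))).2 (Set.mem_toFinset.1 hu)) w
  rw [hsplit, sum_union (Set.disjoint_toFinset.2 hXY.2.1)]
  convert add_mem hX hY using 1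
  rw [hw]
  simp only [one_smul, neg_smul]
  abel

theorem sum_single_mem_range_of_not_bipartite {c : G.ConnectedComponent}
    (hc : ¬∃ X Y, G.IsComponentBipartition c X Y) (w : V → A) {b : A}
    (hw : ∑ u with G.connectedComponentMk u = c, w u = b + b) :
    ∑ u with G.connectedComponentMk u = c, Pi.single u (w u) ∈ (G.wdegHom A).range := by
  obtain ⟨v, hv⟩ := c.nonempty_supp
  have hdouble := (exists_bipartition_or_singleCongr_neg_one (A := A) hv).resolve_left hc
  have hpos : ∀ u ∈ ({u | G.connectedComponentMk u = c} : Finset V),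
      G.SingleCongr A u v 1 := by
    intro u hu
    rcases singleCongr_or_of_reachable (A := A) (reachable_of_mem_supp hv (mem_filter.1 hu).2)
      with hu | hu
    · exact hu
    · intro a
      convert sub_mem (hu a) (hdouble a) using 1
      abel
  convert add_mem (sum_single_sub_smul_mem_range hpos w) (hdouble b) using 1
  rw [hw, Pi.single_add]
  abel

theorem exists_wdeg_eq (w : V → A)
    (hw : ∀ c : G.ConnectedComponent,
      (∃ X Y, G.IsComponentBipartition c X Y ∧
        ∑ u ∈ X.toFinset, w u = ∑ u ∈ Y.toFinset, w u) ∨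
      ((¬∃ X Y, G.IsComponentBipartition c X Y) ∧
        ∃ b, ∑ u with G.connectedComponentMk u = c, w u = b + b)) :
    ∃ f, G.wdeg f = w := by
  suffices w ∈ (G.wdegHom A).range from this
  rw [← univ_sum_single w, ← sum_fiberwise univ G.connectedComponentMk]
  refine sum_mem fun c _ => ?_
  rcases hw c with ⟨X, Y, hXY, hsum⟩ | ⟨hc, b, hsum⟩
  · exact sum_single_mem_range_of_bipartition hXY w hsum
  · exact sum_single_mem_range_of_not_bipartite hc w hsum

end SimpleGraph

section Doubles

variable {B : Type} [AddCommGroup B]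

variable (B) in
def doubles : AddSubgroup B := (nsmulAddMonoidHom 2 : B →+ B).range

theorem mem_doubles {a : B} : a ∈ doubles B ↔ ∃ b, b + b = a := by
  simp [doubles, two_nsmul]

variable [Fintype B]

theorem card_add_self_eq_zero_mul_card_doubles :
    #{a : B | a + a = 0} * Nat.card (doubles B) = Fintype.card B := by
  rw [← Nat.card_eq_fintype_card, doubles, ← AddSubgroup.index_ker, ← AddSubgroup.card_mul_index,
    Nat.card_eq_fintype_card (α := (nsmulAddMonoidHom 2 : B →+ B).ker), Fintype.card_subtype]
  simp [two_nsmul]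

theorem card_filter_add_self_eq_zero (hinv : {a : B | a ≠ 0 ∧ a + a = 0}.Subsingleton)
    (K : AddSubgroup B) :
    #{a | a ∈ K ∧ a + a = 0} = if Even (Nat.card K) then 2 else 1 := by
  have : Fact (Nat.Prime 2) := ⟨Nat.prime_two⟩
  split_ifs with hK
  · obtain ⟨x, hx⟩ := exists_prime_addOrderOf_dvd_card' (G := K) 2 (even_iff_two_dvd.1 hK)
    have hx0 : (x : B) ≠ 0 := by
      intro h
      rw [ZeroMemClass.coe_eq_zero.1 h, addOrderOf_zero] at hx
      exact absurd hx (by norm_num)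
    have hxx : (x : B) + x = 0 := by
      rw [← two_nsmul, ← hx, ← AddSubgroup.addOrderOf_coe]
      exact addOrderOf_nsmul_eq_zero _
    rw [← card_pair hx0.symm]
    congr 1
    ext a
    simp only [mem_filter, mem_univ, true_and, mem_insert, mem_singleton]
    constructor
    · rintro ⟨-, ha⟩
      by_cases ha0 : a = 0
      · exact Or.inl ha0
      · exact Or.inr (hinv ⟨ha0, ha⟩ ⟨hx0, hxx⟩)
    · rintro (rfl | rfl)
      exacts [⟨K.zero_mem, add_zero 0⟩, ⟨x.2, hxx⟩]
  · rw [← card_singleton (0 : B)]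
    congr 1
    ext a
    simp only [mem_filter, mem_univ, true_and, mem_singleton]
    constructor
    · rintro ⟨haK, ha⟩
      by_contra ha0
      have h2 : addOrderOf a = 2 := addOrderOf_eq_prime (by rwa [two_nsmul]) ha0
      exact hK (even_iff_two_dvd.2 (h2 ▸ K.addOrderOf_dvd_natCard haK))
    · rintro rfl
      exact ⟨K.zero_mem, add_zero 0⟩

theorem card_add_self_eq_zero (hinv : {a : B | a ≠ 0 ∧ a + a = 0}.Subsingleton) :
    #{a : B | a + a = 0} = if Even (Fintype.card B) then 2 else 1 := by
  simpa using card_filter_add_self_eq_zero hinv ⊤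

end Doubles

section NegPairs

theorem Finset.exists_pairwise_disjoint_subset_card_eq {α κ : Type} [Fintype κ] (H : Finset α)
    (e : κ → ℕ) (he : ∑ k, e k ≤ #H) :
    ∃ P : κ → Finset α, Pairwise (Disjoint on P) ∧ ∀ k, P k ⊆ H ∧ #(P k) = e k := by
  obtain ⟨φ⟩ : Nonempty ((Σ k, Fin (e k)) ↪ H) :=
    Function.Embedding.nonempty_of_card_le (by simpa using he)
  refine ⟨fun k => univ.map ((Function.Embedding.sigmaMk k).trans
    (φ.trans (Function.Embedding.subtype _))), fun k l hkl => ?_, fun k => ⟨?_, by simp⟩⟩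
  · simp only [Function.onFun, disjoint_left, mem_map, mem_univ, true_and]
    rintro _ ⟨i, rfl⟩ ⟨j, hj⟩
    exact hkl (congrArg Sigma.fst (φ.injective (Subtype.ext hj))).symm
  · intro a ha
    obtain ⟨i, -, rfl⟩ := mem_map.1 ha
    exact (φ _).2

variable {B : Type} [AddCommGroup B]

theorem disjoint_union_neg {H P Q : Finset B} (hH : Disjoint H (-H)) (hP : P ⊆ H) (hQ : Q ⊆ H)
    (hPQ : Disjoint P Q) : Disjoint (P ∪ -P) (Q ∪ -Q) := by
  simp only [disjoint_left, mem_union, mem_neg'] at hH hPQ ⊢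
  rintro a (ha | ha) (ha' | ha')
  exacts [hPQ ha ha', hH (hP ha) (hQ ha'), hH (hQ ha') (hP ha), hPQ ha ha']

theorem exists_extend_by_neg_pairs {κ : Type} [Fintype κ] (E : κ → Finset B) (d : κ → ℕ)
    {H : Finset B} (hE : Pairwise (Disjoint on E)) (hH : Disjoint H (-H))
    (hEH : ∀ k, Disjoint (E k) (H ∪ -H)) (hd : ∀ k, #(E k) ≤ d k ∧ Even (d k - #(E k)))
    (hpool : ∑ k, (d k - #(E k)) ≤ 2 * #H) :
    ∃ F : κ → Finset B, Pairwise (Disjoint on F) ∧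
      ∀ k, #(F k) = d k ∧ ∑ a ∈ F k, a = ∑ a ∈ E k, a := by
  have hhalf : ∀ k, 2 * ((d k - #(E k)) / 2) = d k - #(E k) :=
    fun k => Nat.two_mul_div_two_of_even (hd k).2
  obtain ⟨P, hPdisj, hP⟩ := exists_pairwise_disjoint_subset_card_eq H
    (fun k => (d k - #(E k)) / 2)
    (by rw [← Nat.mul_le_mul_left_iff two_pos, mul_sum]; simpa [hhalf])
  have hEP : ∀ k l, Disjoint (E k) (P l ∪ -P l) := fun k l =>
    (hEH k).mono_right (union_subset_union (hP l).1 (neg_subset_neg (hP l).1))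
  have hPP : ∀ k, Disjoint (P k) (-P k) := fun k => hH.mono (hP k).1 (neg_subset_neg (hP k).1)
  refine ⟨fun k => E k ∪ (P k ∪ -P k), fun k l hkl => ?_, fun k => ⟨?_, ?_⟩⟩
  · exact disjoint_union_left.2 ⟨disjoint_union_right.2 ⟨hE hkl, hEP k l⟩,
      disjoint_union_right.2 ⟨(hEP l k).symm, disjoint_union_neg hH (hP k).1 (hP l).1 (hPdisj hkl)⟩⟩
  · rw [card_union_of_disjoint (hEP k k), card_union_of_disjoint (hPP k), card_neg, (hP k).2,
      ← two_mul, hhalf]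
    have := (hd k).1
    omega
  · rw [sum_union (hEP k k), sum_union (hPP k), sum_neg_index, sum_neg_distrib, add_neg_cancel,
      add_zero]

variable [Fintype B]

variable (B) in
/-- One element out of each pair `{a, -a}` with `a ≠ -a`. -/
noncomputable def negHalf : Finset B := {a | Fintype.equivFin B a < Fintype.equivFin B (-a)}

theorem disjoint_negHalf_neg : Disjoint (negHalf B) (-negHalf B) := by
  simp only [disjoint_left, mem_neg', negHalf, mem_filter, mem_univ, true_and, neg_neg]
  exact fun _ h h' => lt_asymm h h'

theorem notMem_negHalf_union_neg {a : B} (ha : a + a = 0) : a ∉ negHalf B ∪ -negHalf B := by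
  have h : -a = a := neg_eq_iff_add_eq_zero.2 ha
  simp [negHalf, h]

theorem add_self_ne_zero_of_mem_negHalf {a : B} (ha : a ∈ negHalf B) : a + a ≠ 0 :=
  fun h => notMem_negHalf_union_neg h (mem_union_left _ ha)

theorem mem_negHalf_or_neg_mem {a : B} (ha : a + a ≠ 0) : a ∈ negHalf B ∨ -a ∈ negHalf B := by
  have hne : Fintype.equivFin B a ≠ Fintype.equivFin B (-a) := fun h =>
    ha (neg_eq_iff_add_eq_zero.1 ((Fintype.equivFin B).injective h).symm)
  simp only [negHalf, mem_filter, mem_univ, true_and, neg_neg]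
  exact hne.lt_or_gt

theorem two_mul_card_inter_negHalf {S : Finset B} (hneg : ∀ a ∈ S, -a ∈ S)
    (hS : ∀ a ∈ S, a + a ≠ 0) : 2 * #(S ∩ negHalf B) = #S := by
  have hsplit : S = S ∩ negHalf B ∪ -(S ∩ negHalf B) := by
    ext a
    simp only [mem_union, mem_inter, mem_neg']
    refine ⟨fun ha => ?_, ?_⟩
    · rcases mem_negHalf_or_neg_mem (hS a ha) with h | h
      exacts [Or.inl ⟨ha, h⟩, Or.inr ⟨hneg a ha, h⟩]
    · rintro (⟨ha, -⟩ | ⟨ha, -⟩)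
      exacts [ha, neg_neg a ▸ hneg _ ha]
  conv_rhs => rw [hsplit]
  rw [card_union_of_disjoint (disjoint_negHalf_neg.mono inter_subset_right
    (neg_subset_neg inter_subset_right)), card_neg, two_mul]

theorem two_mul_card_negHalf_filter_add (K : AddSubgroup B) :
    2 * #{a ∈ negHalf B | a ∈ K} + #{a | a ∈ K ∧ a + a = 0} = Nat.card K := by
  have hS := two_mul_card_inter_negHalf (S := {a | a ∈ K ∧ a + a ≠ 0})
    (fun a ha => by
      simp only [mem_filter, mem_univ, true_and] at ha ⊢
      exact ⟨K.neg_mem ha.1, by rw [← neg_add, neg_ne_zero]; exact ha.2⟩)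
    (fun a ha => (mem_filter.1 ha).2.2)
  have hinter : ({a | a ∈ K ∧ a + a ≠ 0} : Finset B) ∩ negHalf B = {a ∈ negHalf B | a ∈ K} := by
    ext a
    simp only [mem_inter, mem_filter, mem_univ, true_and]
    exact ⟨fun h => ⟨h.2, h.1.1⟩, fun h => ⟨⟨h.2, add_self_ne_zero_of_mem_negHalf h.1⟩, h.1⟩⟩
  rw [← hinter, hS, Nat.card_eq_fintype_card, Fintype.card_subtype, ← filter_filter,
    ← filter_filter, add_comm, card_filter_add_card_filter_not]

theorem two_mul_card_negHalf_add : 2 * #(negHalf B) + #{a : B | a + a = 0} = Fintype.card B := by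
  simpa using two_mul_card_negHalf_filter_add (⊤ : AddSubgroup B)

end NegPairs

section BalancedFamily

variable {B : Type} [AddCommGroup B] {ι : Type} [Fintype ι] (bip : ι → Prop) (d : ι × Bool → ℕ)

/-- Label sets for the colour classes `(i, true)` and `(i, false)` of the components `i`; a
non-bipartite component is the single class `(i, true)`. -/
def IsBalancedFamily (F : ι × Bool → Finset B) : Prop :=
  Pairwise (Disjoint on F) ∧ (∀ k, #(F k) = d k) ∧
    (∀ i, bip i → ∑ a ∈ F (i, true), a = ∑ a ∈ F (i, false), a) ∧
    ∀ i, ¬bip i → ∑ a ∈ F (i, true), a ∈ doubles B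

variable {bip d}

theorem exists_isBalancedFamily_of_seeds (E : ι × Bool → Finset B) {H : Finset B}
    (hE : Pairwise (Disjoint on E)) (hH : Disjoint H (-H)) (hEH : ∀ k, Disjoint (E k) (H ∪ -H))
    (hd : ∀ k, #(E k) ≤ d k ∧ Even (d k - #(E k))) (hpool : ∑ k, d k ≤ ∑ k, #(E k) + 2 * #H)
    (hbip : ∀ i, bip i → ∑ a ∈ E (i, true), a = ∑ a ∈ E (i, false), a)
    (hnonbip : ∀ i, ¬bip i → ∑ a ∈ E (i, true), a ∈ doubles B) :
    ∃ F : ι × Bool → Finset B, IsBalancedFamily bip d F := by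
  obtain ⟨F, hF, hFE⟩ := exists_extend_by_neg_pairs E d hE hH hEH hd (by
    rw [sum_tsub_distrib _ fun k _ => (hd k).1]
    omega)
  refine ⟨F, hF, fun k => (hFE k).1, fun i hi => ?_, fun i hi => ?_⟩
  · rw [(hFE _).2, (hFE _).2]
    exact hbip i hi
  · rw [(hFE _).2]
    exact hnonbip i hi

theorem exists_isBalancedFamily_of_oddSeeds
    (hbip : ∀ i, bip i → Even (d (i, true)) ∧ Even (d (i, false)))
    {L H : Finset B} (hL : #L = #{k | Odd (d k)}) (hLD : ∀ a ∈ L, a ∈ doubles B)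
    (hH : Disjoint H (-H)) (hLH : Disjoint L (H ∪ -H)) (hpool : ∑ k, d k ≤ #L + 2 * #H) :
    ∃ F : ι × Bool → Finset B, IsBalancedFamily bip d F := by
  set O : Finset (ι × Bool) := {k | Odd (d k)}
  let e : O ≃ L := equivOfCardEq hL.symm
  let g : ι × Bool → B := fun k => if h : k ∈ O then e ⟨k, h⟩ else 0
  have hgL : ∀ k ∈ O, g k ∈ L := fun k hk => by simp only [g, dif_pos hk]; exact (e _).2
  have hginj : ∀ k ∈ O, ∀ l ∈ O, g k = g l → k = l := fun k hk l hl h => by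
    simp only [g, dif_pos hk, dif_pos hl] at h
    exact congrArg Subtype.val (e.injective (Subtype.ext h))
  have hO : ∀ k, k ∈ O ↔ Odd (d k) := fun k => by simp [O]
  refine exists_isBalancedFamily_of_seeds (fun k => if k ∈ O then {g k} else ∅) (H := H)
    (fun k l hkl => ?_) hH (fun k => ?_) (fun k => ?_) ?_ (fun i hi => ?_) (fun i _ => ?_)
  · dsimp only [Function.onFun]
    split_ifs with hk hl
    exacts [disjoint_singleton.2 fun h => hkl (hginj k hk l hl h), disjoint_empty_right _,
      disjoint_empty_left _, disjoint_empty_left _]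
  · split_ifs with hk
    exacts [disjoint_singleton_left.2 (disjoint_left.1 hLH (hgL k hk)), disjoint_empty_left _]
  · split_ifs with hk
    · have hodd := (hO k).1 hk
      exact ⟨by simpa [Nat.one_le_iff_ne_zero] using hodd.pos.ne',
        by simpa using hodd.tsub_odd odd_one⟩
    · exact ⟨by simp, by simpa [Nat.not_odd_iff_even] using mt (hO k).2 hk⟩
  · simpa [apply_ite card, sum_boole, hL] using hpool
  · have hodd : ∀ b, (i, b) ∉ O := fun b h => by
      cases b
      exacts [Nat.not_odd_iff_even.2 (hbip i hi).2 ((hO _).1 h),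
        Nat.not_odd_iff_even.2 (hbip i hi).1 ((hO _).1 h)]
    simp [hodd]
  · split_ifs with hk
    exacts [by simpa using hLD _ (hgL _ hk), by simp]

theorem exists_isBalancedFamily_of_seeds_at (i₀ : ι) {P Q H : Finset B} (hPQ : Disjoint P Q)
    (hH : Disjoint H (-H)) (hPQH : Disjoint (P ∪ Q) (H ∪ -H)) (heven : ∀ k, Even (d k))
    (hP : #P ≤ d (i₀, true) ∧ Even #P) (hQ : #Q ≤ d (i₀, false) ∧ Even #Q)
    (hpool : ∑ k, d k ≤ #P + #Q + 2 * #H)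
    (hbip : bip i₀ → ∑ a ∈ P, a = ∑ a ∈ Q, a) (hnonbip : ¬bip i₀ → ∑ a ∈ P, a ∈ doubles B) :
    ∃ F : ι × Bool → Finset B, IsBalancedFamily bip d F := by
  have hne : ((i₀, true) : ι × Bool) ≠ (i₀, false) := by simp
  set E : ι × Bool → Finset B :=
    fun k => if k = (i₀, true) then P else if k = (i₀, false) then Q else ∅
  have hE : ∑ k, #(E k) = #P + #Q := by
    rw [Fintype.sum_eq_add _ _ hne fun k hk => by simp [E, hk.1, hk.2]]
    simp [E, hne.symm]
  refine exists_isBalancedFamily_of_seeds E (H := H) (fun k l hkl => ?_) hH (fun k => ?_)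
    (fun k => ?_) (hE ▸ hpool) (fun i hi => ?_) (fun i hi => ?_)
  · dsimp only [Function.onFun, E]
    split_ifs <;> subst_vars <;> simp_all [hPQ.symm]
  · refine hPQH.mono_left ?_
    dsimp only [E]
    split_ifs
    exacts [subset_union_left, subset_union_right, empty_subset _]
  · dsimp only [E]
    split_ifs with h₁ h₂
    · subst h₁; exact ⟨hP.1, (heven _).tsub hP.2⟩
    · subst h₂; exact ⟨hQ.1, (heven _).tsub hQ.2⟩
    · simpa using heven k
  · by_cases h : i = i₀
    · subst h; simpa [E, hne.symm] using hbip hi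
    · simp [E, h]
  · by_cases h : i = i₀
    · subst h; simpa [E] using hnonbip hi
    · simp [E, h]

theorem disjoint_pair_zero_pair_add_self {σ : B} (hσ : σ + σ ≠ 0) (hσ4 : σ + σ + (σ + σ) = 0) :
    σ ≠ 0 ∧ σ + σ ≠ -σ ∧ Disjoint ({0, σ} : Finset B) {σ + σ, -σ} := by
  have hσ0 : σ ≠ 0 := fun h => hσ (by simp [h])
  refine ⟨hσ0, fun h => hσ0 ?_, ?_⟩
  · have h3 : σ + σ + σ = 0 := by rw [h, neg_add_cancel]
    calc σ = σ + σ + (σ + σ) - (σ + σ + σ) := by abel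
      _ = 0 := by rw [hσ4, h3, sub_zero]
  simp only [disjoint_left, mem_insert, mem_singleton]
  rintro a (ha | ha) (h | h) <;> rw [ha] at h
  · exact hσ h.symm
  · exact hσ0 (neg_eq_zero.1 h.symm)
  · refine hσ0 ?_
    calc σ = σ + σ - σ := by abel
      _ = 0 := by rw [← h, sub_self]
  · exact hσ (neg_eq_iff_add_eq_zero.1 h.symm)

variable [Fintype B]

theorem exists_oddSeeds_and_pool {r s : ℕ} (hs : s ≤ #{a : B | a ∈ doubles B ∧ a + a = 0})
    (hsr : s ≤ r) (hpar : Even (r - s)) (hr : r - s ≤ 2 * #{a ∈ negHalf B | a ∈ doubles B}) :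
    ∃ L H : Finset B, #L = r ∧ (∀ a ∈ L, a ∈ doubles B) ∧ Disjoint H (-H) ∧
      Disjoint L (H ∪ -H) ∧ r + 2 * #H = 2 * #(negHalf B) + s := by
  obtain ⟨S, hS, hScard⟩ := exists_subset_card_eq hs
  obtain ⟨M, hM, hMcard⟩ := exists_subset_card_eq (s := {a ∈ negHalf B | a ∈ doubles B})
    (n := (r - s) / 2) (by omega)
  have hMH : M ⊆ negHalf B := hM.trans (filter_subset _ _)
  have hSself : ∀ a ∈ S, a ∉ negHalf B ∪ -negHalf B := fun a ha =>
    notMem_negHalf_union_neg (mem_filter.1 (hS ha)).2.2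
  have hHsub : negHalf B \ M ∪ -(negHalf B \ M) ⊆ negHalf B ∪ -negHalf B :=
    union_subset_union sdiff_subset (neg_subset_neg sdiff_subset)
  have hMsub : M ∪ -M ⊆ negHalf B ∪ -negHalf B := union_subset_union hMH (neg_subset_neg hMH)
  refine ⟨S ∪ (M ∪ -M), negHalf B \ M, ?_, ?_, disjoint_negHalf_neg.mono sdiff_subset
    (neg_subset_neg sdiff_subset), disjoint_union_left.2 ⟨disjoint_left.2 fun a ha h =>
      hSself a ha (hHsub h), disjoint_union_neg disjoint_negHalf_neg hMH sdiff_subset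
        disjoint_sdiff⟩, ?_⟩
  · rw [card_union_of_disjoint (disjoint_left.2 fun a ha h => hSself a ha (hMsub h)),
      card_union_of_disjoint (disjoint_negHalf_neg.mono hMH (neg_subset_neg hMH)), card_neg,
      hScard, hMcard, ← two_mul, Nat.two_mul_div_two_of_even hpar]
    omega
  · have hMD : ∀ a ∈ M, a ∈ doubles B := fun a ha => (mem_filter.1 (hM ha)).2
    simp only [mem_union, mem_neg']
    rintro a (ha | ha | ha)
    exacts [(mem_filter.1 (hS ha)).2.1, hMD a ha, neg_neg a ▸ neg_mem (hMD _ ha)]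
  · have hle := hMcard ▸ card_le_card hMH
    have := Nat.two_mul_div_two_of_even hpar
    rw [card_sdiff_of_subset hMH, hMcard]
    omega

theorem disjoint_pair_zero_pair_add_self_negHalf_erase {σ : B} (hσ4 : σ + σ + (σ + σ) = 0)
    (hσH : σ ∈ negHalf B) :
    Disjoint ({0, σ} ∪ {σ + σ, -σ} : Finset B) ((negHalf B).erase σ ∪ -(negHalf B).erase σ) := by
  have hsub : (negHalf B).erase σ ∪ -(negHalf B).erase σ ⊆ negHalf B ∪ -negHalf B :=
    union_subset_union (erase_subset _ _) (neg_subset_neg (erase_subset _ _))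
  have hσ' : -σ ∉ negHalf B := fun h => disjoint_left.1 disjoint_negHalf_neg hσH (mem_neg'.2 h)
  rw [disjoint_left]
  intro a ha
  simp only [mem_union, mem_insert, mem_singleton] at ha
  rcases ha with (rfl | rfl) | (rfl | rfl) <;> intro ha
  · exact notMem_negHalf_union_neg (add_zero 0) (hsub ha)
  · simp only [mem_union, mem_erase, mem_neg'] at ha
    exact ha.elim (fun h => h.1 rfl) fun h => hσ' h.2
  · exact notMem_negHalf_union_neg hσ4 (hsub ha)
  · simp only [mem_union, mem_erase, mem_neg', neg_neg] at ha
    exact ha.elim (fun h => hσ' h.2) fun h => h.1 rfl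

/-- When every group element is a label, `0` and the involution `σ + σ` cannot be paired off;
they go into `{0, σ}` and `{σ + σ, -σ}`, which have the same sum. -/
theorem exists_isBalancedFamily_of_gadget {σ : B} (hσ : σ + σ ≠ 0) (hσ4 : σ + σ + (σ + σ) = 0)
    (hσH : σ ∈ negHalf B) (i₀ : ι) (hbip₀ : bip i₀ → 2 ≤ d (i₀, true) ∧ 2 ≤ d (i₀, false))
    (hnonbip₀ : ¬bip i₀ → 4 ≤ d (i₀, true)) (heven : ∀ k, Even (d k))
    (hpool : ∑ k, d k ≤ 2 * #(negHalf B) + 2) :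
    ∃ F : ι × Bool → Finset B, IsBalancedFamily bip d F := by
  obtain ⟨hσ0, hσ3, hXY⟩ := disjoint_pair_zero_pair_add_self hσ hσ4
  have hX₀ : #({0, σ} : Finset B) = 2 := card_pair (Ne.symm hσ0)
  have hY₀ : #({σ + σ, -σ} : Finset B) = 2 := card_pair hσ3
  have hH : Disjoint ((negHalf B).erase σ) (-(negHalf B).erase σ) :=
    disjoint_negHalf_neg.mono (erase_subset _ _) (neg_subset_neg (erase_subset _ _))
  have hXYH := disjoint_pair_zero_pair_add_self_negHalf_erase hσ4 hσH
  have hHcard := card_erase_add_one hσH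
  by_cases hb : bip i₀
  · refine exists_isBalancedFamily_of_seeds_at i₀ hXY hH hXYH heven
      ⟨hX₀ ▸ (hbip₀ hb).1, hX₀ ▸ even_two⟩ ⟨hY₀ ▸ (hbip₀ hb).2, hY₀ ▸ even_two⟩ (by omega)
      (fun _ => ?_) (absurd hb)
    rw [sum_pair (Ne.symm hσ0), sum_pair hσ3]
    abel
  · refine exists_isBalancedFamily_of_seeds_at (P := {0, σ} ∪ {σ + σ, -σ}) (Q := ∅) i₀
      (disjoint_empty_right _) hH (by rwa [union_empty]) heven ?_ (by simp)
      (by rw [card_union_of_disjoint hXY]; omega) (absurd · hb) fun _ => ?_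
    · rw [card_union_of_disjoint hXY, hX₀, hY₀]
      exact ⟨hnonbip₀ hb, by decide⟩
    · rw [sum_union hXY, sum_pair (Ne.symm hσ0), sum_pair hσ3]
      exact mem_doubles.2 ⟨σ, by abel⟩

theorem exists_mem_negHalf_of_one_lt_card (h : 1 < #{a : B | a ∈ doubles B ∧ a + a = 0}) :
    ∃ σ ∈ negHalf B, σ + σ ≠ 0 ∧ σ + σ + (σ + σ) = 0 := by
  obtain ⟨a, ha, ha0⟩ := exists_mem_ne h 0
  obtain ⟨haD, haa⟩ := (mem_filter.1 ha).2
  obtain ⟨σ, rfl⟩ := mem_doubles.1 haD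
  rcases mem_negHalf_or_neg_mem ha0 with hσ | hσ
  · exact ⟨σ, hσ, ha0, haa⟩
  · refine ⟨-σ, hσ, ?_, ?_⟩ <;> rw [← neg_add]
    exacts [neg_ne_zero.2 ha0, by rw [← neg_add, haa, neg_zero]]

theorem exists_isBalancedFamily_of_sum_eq_card (hinv : {a : B | a ≠ 0 ∧ a + a = 0}.Subsingleton)
    (hbip : ∀ i, bip i → d (i, true) ≠ 0 ∧ d (i, false) ≠ 0)
    (hnonbip : ∀ i, ¬bip i → 3 ≤ d (i, true)) (heven : ∀ k, Even (d k))
    (hsum : ∑ k, d k = Fintype.card B) (h4 : Fintype.card B % 4 = 0) :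
    ∃ F : ι × Bool → Finset B, IsBalancedFamily bip d F := by
  have hτ := card_add_self_eq_zero hinv
  have hz := card_filter_add_self_eq_zero hinv (doubles B)
  have hτδ := card_add_self_eq_zero_mul_card_doubles (B := B)
  have hh := two_mul_card_negHalf_add (B := B)
  rw [if_pos (Nat.even_iff.2 (by omega))] at hτ
  rw [hτ] at hτδ hh
  rw [if_pos (Nat.even_iff.2 (by omega))] at hz
  obtain ⟨σ, hσH, hσ, hσ4⟩ := exists_mem_negHalf_of_one_lt_card (B := B) (by rw [hz]; norm_num)
  obtain ⟨k, -, hk⟩ := exists_ne_zero_of_sum_ne_zero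
    (show ∑ k, d k ≠ 0 by have := Fintype.card_pos (α := B); omega)
  refine exists_isBalancedFamily_of_gadget hσ hσ4 hσH k.1 (fun hi => ?_) (fun hi => ?_) heven
    (by omega)
  · have := hbip k.1 hi
    have := Nat.even_iff.1 (heven (k.1, true))
    have := Nat.even_iff.1 (heven (k.1, false))
    omega
  · have := hnonbip k.1 hi
    have := Nat.even_iff.1 (heven (k.1, true))
    omega

/-- Here `t = |B|`, `τ = |B[2]|`, `δ = |2B|`, `z = |2B ∩ B[2]|`, and `h`, `h₂` count the pairs
`{a, -a}` with `a ≠ -a` in `B` and in `2B`. Of the `r` seeds (one per odd cell), `s` are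
self-inverse and the others come in pairs; the remaining `n - r` labels are pairs. -/
theorem exists_seed_count {t δ τ z h h₂ n r : ℕ} (hτδ : τ * δ = t)
    (hτ : τ = if Even t then 2 else 1) (hz : z = if Even δ then 2 else 1) (hh : 2 * h + τ = t)
    (hh₂ : 2 * h₂ + z = δ) (hr3 : 3 * r ≤ n) (hrn : n % 2 = r % 2)
    (hcard : (if n % 4 = 2 then n + 1 else n) ≤ t) (hgad : ¬(r = 0 ∧ n = t)) :
    ∃ s ≤ z, s ≤ r ∧ Even (r - s) ∧ r - s ≤ 2 * h₂ ∧ n ≤ 2 * h + s := by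
  simp only [Nat.even_iff] at hτ hz ⊢
  refine ⟨if r % 2 = 1 then 1 else if 2 ≤ r ∧ z = 2 then 2 else 0, ?_⟩
  split_ifs at hτ hz hcard ⊢ <;> subst hτ <;> omega

theorem three_mul_card_odd_le_sum {κ : Type} [Fintype κ] (d : κ → ℕ)
    (hodd : ∀ k, Odd (d k) → 3 ≤ d k) : 3 * #{k | Odd (d k)} ≤ ∑ k, d k := calc
  3 * #{k | Odd (d k)} = ∑ k ∈ {k | Odd (d k)}, 3 := by simp [mul_comm]
  _ ≤ ∑ k ∈ {k | Odd (d k)}, d k := sum_le_sum fun k hk => hodd k (mem_filter.1 hk).2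
  _ ≤ ∑ k, d k := sum_le_sum_of_subset (subset_univ _)

theorem exists_isBalancedFamily (hinv : {a : B | a ≠ 0 ∧ a + a = 0}.Subsingleton)
    (hbip : ∀ i, bip i →
      Even (d (i, true)) ∧ Even (d (i, false)) ∧ d (i, true) ≠ 0 ∧ d (i, false) ≠ 0)
    (hnonbip : ∀ i, ¬bip i → 3 ≤ d (i, true) ∧ d (i, false) = 0)
    (hcard : (if (∑ k, d k) % 4 = 2 then ∑ k, d k + 1 else ∑ k, d k) ≤ Fintype.card B) :
    ∃ F : ι × Bool → Finset B, IsBalancedFamily bip d F := by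
  have hodd : ∀ k, Odd (d k) → 3 ≤ d k := by
    rintro ⟨i, _ | _⟩ hk <;> by_cases hi : bip i
    · exact absurd hk (Nat.not_odd_iff_even.2 (hbip i hi).2.1)
    · simp [(hnonbip i hi).2] at hk
    · exact absurd hk (Nat.not_odd_iff_even.2 (hbip i hi).1)
    · exact (hnonbip i hi).1
  have hr3 := three_mul_card_odd_le_sum d hodd
  have hrn : (∑ k, d k) % 2 = #{k | Odd (d k)} % 2 := by
    have := even_sum_iff_even_card_odd (s := univ) d
    rw [Nat.even_iff, Nat.even_iff] at this
    omega
  by_cases hgad : #{k | Odd (d k)} = 0 ∧ ∑ k, d k = Fintype.card B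
  · have heven : ∀ k, Even (d k) := fun k => by
      by_contra hk
      have : 0 < #{k | Odd (d k)} := card_pos.2 ⟨k, by simpa [Nat.not_even_iff_odd] using hk⟩
      omega
    refine exists_isBalancedFamily_of_sum_eq_card hinv (fun i hi => (hbip i hi).2.2)
      (fun i hi => (hnonbip i hi).1) heven hgad.2 ?_
    split_ifs at hcard <;> omega
  obtain ⟨s, hs, hsr, hpar, hr, hn⟩ := exists_seed_count card_add_self_eq_zero_mul_card_doubles
    (card_add_self_eq_zero hinv) (card_filter_add_self_eq_zero hinv (doubles B))
    two_mul_card_negHalf_add (two_mul_card_negHalf_filter_add (doubles B)) hr3 hrn hcard hgad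
  obtain ⟨L, H, hL, hLD, hH, hLH, hcount⟩ := exists_oddSeeds_and_pool hs hsr hpar hr
  exact exists_isBalancedFamily_of_oddSeeds (fun i hi => ⟨(hbip i hi).1, (hbip i hi).2.1⟩) hL
    hLD hH hLH (by omega)

end BalancedFamily

theorem exists_injective_sum_fiber_eq {V κ B : Type} [Fintype V] [DecidableEq κ]
    [AddCommMonoid B] (cell : V → κ) (F : κ → Finset B) (hF : Pairwise (Disjoint on F))
    (hcard : ∀ k, #{v | cell v = k} = #(F k)) :
    ∃ w : V → B, Injective w ∧ ∀ k, ∑ v with cell v = k, w v = ∑ b ∈ F k, b := by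
  have e : ∀ k, {v // cell v = k} ≃ F k := fun k =>
    Fintype.equivOfCardEq (by rw [Fintype.card_subtype, hcard, Fintype.card_coe])
  let w : V → B := fun v => e (cell v) ⟨v, rfl⟩
  have hw : ∀ k (x : {v // cell v = k}), w x = e k x := by
    rintro k ⟨v, rfl⟩
    rfl
  refine ⟨w, fun u v huv => ?_, fun k => ?_⟩
  · by_cases h : cell u = cell v
    · rw [hw _ ⟨u, h⟩, hw _ ⟨v, rfl⟩] at huv
      exact congrArg Subtype.val ((e _).injective (Subtype.ext huv))
    · have hv : w u ∈ F (cell v) := huv ▸ (e (cell v) ⟨v, rfl⟩).2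
      exact (disjoint_left.1 (hF h) (e (cell u) ⟨u, rfl⟩).2 hv).elim
  · rw [sum_subtype _ (p := fun v => cell v = k) (fun v => by simp) w, ← sum_coe_sort (F k)]
    exact Fintype.sum_equiv (e k) _ _ (hw k)

namespace SimpleGraph

variable {V : Type} [Fintype V] {G : SimpleGraph V}

theorem exists_componentwise_bipartition : ∃ side : V → Bool, ∀ c : G.ConnectedComponent,
    ((∃ X Y, G.IsComponentBipartition c X Y) →
      G.IsComponentBipartition c {v ∈ c.supp | side v = true} {v ∈ c.supp | side v = false}) ∧
    ((¬∃ X Y, G.IsComponentBipartition c X Y) → ∀ v ∈ c.supp, side v) := by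
  have : ∀ c : G.ConnectedComponent, ∃ X : Set V,
      (∃ X Y, G.IsComponentBipartition c X Y) → ∃ Y, G.IsComponentBipartition c X Y := by
    intro c
    by_cases hc : ∃ X Y, G.IsComponentBipartition c X Y
    · obtain ⟨X, Y, h⟩ := hc
      exact ⟨X, fun _ => ⟨Y, h⟩⟩
    · exact ⟨∅, fun h => (hc h).elim⟩
  choose X hX using this
  refine ⟨fun v => if ∃ X Y, G.IsComponentBipartition (G.connectedComponentMk v) X Y then
    decide (v ∈ X (G.connectedComponentMk v)) else true, fun c => ⟨fun hc => ?_, fun hc v hv => ?_⟩⟩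
  · obtain ⟨Y, hXY⟩ := hX c hc
    have hside : ∀ v ∈ c.supp, (if ∃ X Y, G.IsComponentBipartition (G.connectedComponentMk v) X Y
        then decide (v ∈ X (G.connectedComponentMk v)) else true) = decide (v ∈ X c) :=
      fun v hv => by rw [(c.mem_supp_iff v).1 hv, if_pos hc]
    have hXc : ∀ v ∈ X c, v ∈ c.supp := fun v h => hXY.1 ▸ Or.inl h
    have hYc : ∀ v ∈ Y, v ∈ c.supp := fun v h => hXY.1 ▸ Or.inr h
    convert hXY using 1 <;> ext v
    · exact ⟨fun ⟨hv, h⟩ => by simpa [hside v hv] using h,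
        fun h => ⟨hXc v h, by simpa [hside v (hXc v h)] using h⟩⟩
    · refine ⟨fun ⟨hv, h⟩ => ?_, fun h => ⟨hYc v h, ?_⟩⟩
      · have hvX : v ∉ X c := by simpa [hside v hv] using h
        exact ((hXY.1 ▸ hv : v ∈ X c ∪ Y)).resolve_left hvX
      · simpa [hside v (hYc v h)] using hXY.2.1.notMem_of_mem_right h
  · rw [← (c.mem_supp_iff v).1 hv] at hc
    simp [hc]

theorem exists_isBalancedFamily_of_side {A : Type} [AddCommGroup A] [Fintype A] {side : V → Bool}
    (hside : ∀ c : G.ConnectedComponent,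
      ((∃ X Y, G.IsComponentBipartition c X Y) →
        G.IsComponentBipartition c {v ∈ c.supp | side v = true} {v ∈ c.supp | side v = false}) ∧
      ((¬∃ X Y, G.IsComponentBipartition c X Y) → ∀ v ∈ c.supp, side v))
    (hcomp : ∀ c : G.ConnectedComponent, 3 ≤ c.supp.ncard)
    (hbip : ∀ (c : G.ConnectedComponent) (X Y : Set V),
      G.IsComponentBipartition c X Y → Even X.ncard ∧ Even Y.ncard)
    (hcard : (if Fintype.card V % 4 = 2 then Fintype.card V + 1 else Fintype.card V) ≤
      Fintype.card A)
    (hinv : {a : A | a ≠ 0 ∧ a + a = 0}.Subsingleton) :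
    ∃ F : G.ConnectedComponent × Bool → Finset A,
      IsBalancedFamily (fun c => ∃ X Y, G.IsComponentBipartition c X Y)
        (fun k => #{v | (G.connectedComponentMk v, side v) = k}) F := by
  have hd : ∀ c b, #{v | (G.connectedComponentMk v, side v) = (c, b)} =
      {v ∈ c.supp | side v = b}.ncard := fun c b => by
    rw [← Set.ncard_coe_finset]
    congr 1
    ext v
    simp [ConnectedComponent.mem_supp_iff]
  have hnonbip : ∀ c, (¬∃ X Y, G.IsComponentBipartition c X Y) →
      ∀ b, {v ∈ c.supp | side v = b} = if b then c.supp else ∅ := fun c hc b => by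
    ext v
    cases b <;> simp +contextual [(hside c).2 hc v]
  refine exists_isBalancedFamily hinv (fun c hc => ?_) (fun c hc => ?_) ?_
  · have hXY := (hside c).1 hc
    have h2 : 2 ≤ c.supp.ncard := (by norm_num : 2 ≤ 3).trans (hcomp c)
    simp only [hd]
    exact ⟨(hbip c _ _ hXY).1, (hbip c _ _ hXY).2, (hXY.nonempty_left h2).ncard_pos.ne',
      (hXY.symm.nonempty_left h2).ncard_pos.ne'⟩
  · rw [hd, hd, hnonbip c hc, hnonbip c hc]
    simpa using hcomp c
  · rwa [← card_eq_sum_card_fiberwise fun v _ => mem_univ _, card_univ]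

theorem exists_injective_balanced_weighting {A : Type} [AddCommGroup A] [Fintype A]
    (hcomp : ∀ c : G.ConnectedComponent, 3 ≤ c.supp.ncard)
    (hbip : ∀ (c : G.ConnectedComponent) (X Y : Set V),
      G.IsComponentBipartition c X Y → Even X.ncard ∧ Even Y.ncard)
    (hcard : (if Fintype.card V % 4 = 2 then Fintype.card V + 1 else Fintype.card V) ≤
      Fintype.card A)
    (hinv : {a : A | a ≠ 0 ∧ a + a = 0}.Subsingleton) :
    ∃ w : V → A, Injective w ∧ ∀ c : G.ConnectedComponent,
      (∃ X Y, G.IsComponentBipartition c X Y ∧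
        ∑ u ∈ X.toFinset, w u = ∑ u ∈ Y.toFinset, w u) ∨
      ((¬∃ X Y, G.IsComponentBipartition c X Y) ∧
        ∃ b, ∑ u with G.connectedComponentMk u = c, w u = b + b) := by
  obtain ⟨side, hside⟩ := G.exists_componentwise_bipartition
  obtain ⟨F, hF, hFd, hFbip, hFnonbip⟩ :=
    exists_isBalancedFamily_of_side hside hcomp hbip hcard hinv
  obtain ⟨w, hw, hwF⟩ := exists_injective_sum_fiber_eq (fun v => (G.connectedComponentMk v, side v))
    F hF fun k => (hFd k).symm
  refine ⟨w, hw, fun c => ?_⟩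
  by_cases hc : ∃ X Y, G.IsComponentBipartition c X Y
  · refine Or.inl ⟨_, _, (hside c).1 hc, ?_⟩
    calc _ = ∑ v with (G.connectedComponentMk v, side v) = (c, true), w v :=
          sum_congr (by ext v; simp [ConnectedComponent.mem_supp_iff]) fun _ _ => rfl
      _ = ∑ v with (G.connectedComponentMk v, side v) = (c, false), w v := by
          rw [hwF, hwF]; exact hFbip c hc
      _ = _ := sum_congr (by ext v; simp [ConnectedComponent.mem_supp_iff]) fun _ _ => rfl
  · refine Or.inr ⟨hc, (mem_doubles.1 (hFnonbip c hc)).imp fun b hb => ?_⟩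
    rw [hb, ← hwF]
    congr 1
    ext v
    simp only [mem_filter, mem_univ, true_and, Prod.mk.injEq]
    exact ⟨fun h => ⟨h, (hside c).2 hc v h⟩, fun h => h.1⟩

end SimpleGraph

/-- Let `G` be a finite simple graph of order `n` with no component of order less
than 3 and all bipartite components having both color classes of even order. Let
`s = n + 1` if `n ≡ 2 (mod 4)` and `s = n` otherwise. Then for every integer `t ≥ s`
and every Abelian group of order `t` with at most one involution, there exists a
`𝒢`-irregular labeling of `G`. -/
theorem exists_irregular_labeling_of_at_most_one_involution
    {V : Type} [Fintype V] (G : SimpleGraph V) (n : ℕ) (hn : Fintype.card V = n)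
    (hcomp : ∀ c : G.ConnectedComponent, 3 ≤ c.supp.ncard)
    (hbip : ∀ (c : G.ConnectedComponent) (X Y : Set V),
      G.IsComponentBipartition c X Y → Even X.ncard ∧ Even Y.ncard)
    (s : ℕ) (hs : s = if n % 4 = 2 then n + 1 else n) :
    ∀ t : ℕ, s ≤ t →
      ∀ (A : Type) [AddCommGroup A] [Fintype A], Fintype.card A = t →
        ({ι : A | ι ≠ 0 ∧ ι + ι = 0}.Subsingleton) →
        ∃ f : Sym2 V → A, G.IsIrregular f := by
  intro t hst A _ _ hA hinv
  subst hn hs hA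
  obtain ⟨w, hw, hbalanced⟩ := G.exists_injective_balanced_weighting hcomp hbip hst hinv
  obtain ⟨f, hf⟩ := G.exists_wdeg_eq w hbalanced
  exact ⟨f, by rw [SimpleGraph.IsIrregular, hf]; exact hw⟩
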